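/- arXiv:0904.0572 — 4 statements merged into one kernel-verified Lean document; each statement's English description precedes it below -/
import Mathlib

section
/- Let σ be an order-3 automorphism of g with reductive decomposition g = m ⊕ k (k the fixed algebra of σ, m a σ-invariant complement with no nonzero σ-fixed vectors), and J₀ = (1/√3)(2σ|_m + Id_m). Then for all X, Y ∈ m: [J₀X, J₀Y]_k = [X,Y]_k and [J₀X, Y]_m = −J₀[X,Y]_m. -/
/-!
On `m` the automorphism satisfies `σ² + σ + 1 = 0`, and both components `[x, y]_k`, `[x, y]_m`
of the bracket are `σ`-equivariant bilinear maps `B` (with `σ` acting trivially on `k`).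
Expanding `B (σ² x) (σ y)` with `σ² = -σ - 1` gives `t (B (σ x) y) + B x (σ y) = -t (B x y)`,
where `t` is the action of `σ` on the target. For `t = id` this yields
`B (2σx + x) (2σy + y) = 3 B x y`, which is the first identity since `J₀ = (2σ + 1)/√3`.
For `t = σ|_m`, comparing the identity with its mirror image shows `B (σ x) y = σ² (B x y)`,
and `2σ² + 1 = -(2σ + 1)` turns this into the second identity.
-/

theorem Module.End.eq_zero_of_apply_eq_self {K N : Type*} [Field K] [NeZero (3 : K)]
    [AddCommGroup N] [Module K N] {t : Module.End K N} (ht : ∀ z, t (t z) + t z + z = 0)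
    {z : N} (h : t z = z) : z = 0 := by
  have h3 : (3 : K) • z = 0 := by
    rw [← ht z, h, h]
    module
  exact (smul_eq_zero.mp h3).resolve_left (NeZero.ne _)

namespace LinearMap

section CommRing

variable {R M N : Type*} [CommRing R] [AddCommGroup M] [Module R M] [AddCommGroup N] [Module R N]
  {s : Module.End R M} {t : Module.End R N} {B : M →ₗ[R] M →ₗ[R] N}

theorem map_apply_left_add_apply_right (hs : ∀ x, s (s x) + s x + x = 0)
    (hB : ∀ x y, B (s x) (s y) = t (B x y)) (x y : M) :
    t (B (s x) y) + B x (s y) = -t (B x y) := by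
  have hsx : s (s x) = -s x - x := by linear_combination (norm := module) hs x
  rw [← hB (s x) y, hsx, ← hB x y]
  simp only [map_sub, map_neg, sub_apply, neg_apply]
  abel

theorem apply_two_smul_add_of_invariant (hs : ∀ x, s (s x) + s x + x = 0)
    (hB : ∀ x y, B (s x) (s y) = B x y) (x y : M) :
    B ((2 : R) • s x + x) ((2 : R) • s y + y) = (3 : R) • B x y := by
  have h := map_apply_left_add_apply_right (t := LinearMap.id) hs hB x y
  simp only [id_apply] at h
  simp only [map_add, map_smul, add_apply, smul_apply, hB]
  linear_combination (norm := module) (2 : R) • h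

end CommRing

section Field

variable {K M N : Type*} [Field K] [NeZero (3 : K)] [AddCommGroup M] [Module K M]
  [AddCommGroup N] [Module K N] {s : Module.End K M} {t : Module.End K N}
  {B : M →ₗ[K] M →ₗ[K] N}

theorem apply_left_of_equivariant (hs : ∀ x, s (s x) + s x + x = 0)
    (ht : ∀ z, t (t z) + t z + z = 0) (hB : ∀ x y, B (s x) (s y) = t (B x y)) (x y : M) :
    B (s x) y = -t (B x y) - B x y := by
  have hleft := map_apply_left_add_apply_right hs hB x y
  have hright := map_apply_left_add_apply_right (B := B.flip) hs (fun x y => hB y x) y x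
  simp only [flip_apply] at hright
  have hsymm : B (s x) y = B x (s y) := by
    rw [← sub_eq_zero]
    refine Module.End.eq_zero_of_apply_eq_self ht ?_
    rw [map_sub]
    linear_combination (norm := module) hleft - hright
  rw [← hsymm] at hleft
  have htleft := congrArg t hleft
  rw [map_add, map_neg] at htleft
  linear_combination (norm := module) ht (B (s x) y) - htleft + ht (B x y)

end Field

end LinearMap

theorem Submodule.projectionOnto_map_apply {R E : Type*} [Ring R] [AddCommGroup E] [Module R E]
    {p q : Submodule R E} (hpq : IsCompl p q) {f : Module.End R E}
    (hp : ∀ x ∈ p, f x ∈ p) (hq : ∀ x ∈ q, f x ∈ q) (x : E) :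
    p.projectionOnto q hpq (f x) = f.restrict hp (p.projectionOnto q hpq x) :=
  Subtype.ext <| congrArg (· x)
    ((LinearMap.IsIdempotentElem.commute_iff (isIdempotentElem_projection hpq)).mpr
      ⟨by rwa [range_projection], by rwa [ker_projection]⟩).eq

namespace LieAlgebra

variable {R L : Type*} [CommRing R] [LieRing L] [LieAlgebra R L]

/-- `(x, y) ↦ [x, y]_p` on `m`, the `p`-component of the bracket for the splitting `L = p ⊕ q`. -/
noncomputable def bracketComponent (m p q : Submodule R L) (hpq : IsCompl p q) :
    m →ₗ[R] m →ₗ[R] p :=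
  ((ad R L : L →ₗ[R] Module.End R L).compl₁₂ m.subtype m.subtype).compr₂ (p.projectionOnto q hpq)

theorem bracketComponent_map (σ : L ≃ₗ⁅R⁆ L) {m p q : Submodule R L} (hpq : IsCompl p q)
    (hm : ∀ x ∈ m, σ x ∈ m) (hp : ∀ x ∈ p, σ x ∈ p) (hq : ∀ x ∈ q, σ x ∈ q) (x y : m) :
    bracketComponent m p q hpq ((σ.toLinearEquiv : L →ₗ[R] L).restrict hm x)
        ((σ.toLinearEquiv : L →ₗ[R] L).restrict hm y)
      = (σ.toLinearEquiv : L →ₗ[R] L).restrict hp (bracketComponent m p q hpq x y) :=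
  (congrArg (p.projectionOnto q hpq) (σ.map_lie x y).symm).trans
    (p.projectionOnto_map_apply hpq (f := σ.toLinearEquiv) hp hq _)

end LieAlgebra

open LieAlgebra

theorem canonical_J_bracket_general
    {g : Type*} [LieRing g] [LieAlgebra ℝ g]
    (σ : g ≃ₗ⁅ℝ⁆ g)
    (k m : Submodule ℝ g)
    (hk : ∀ x : g, x ∈ k ↔ σ x = x)
    (hinv : ∀ x ∈ m, σ x ∈ m)
    (hquad : ∀ x ∈ m, σ (σ x) + σ x + x = 0)
    (hcompl : IsCompl m k)
    (J : g → g)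
    (hJ : ∀ x : g, J x = (Real.sqrt 3)⁻¹ • ((2 : ℝ) • σ x + x))
    (X Y : g) (hX : X ∈ m) (hY : Y ∈ m) :
    ((Submodule.linearProjOfIsCompl k m hcompl.symm ⁅J X, J Y⁆ : k) : g)
        = ((Submodule.linearProjOfIsCompl k m hcompl.symm ⁅X, Y⁆ : k) : g)
    ∧ ((Submodule.linearProjOfIsCompl m k hcompl ⁅J X, Y⁆ : m) : g)
        = -J ((Submodule.linearProjOfIsCompl m k hcompl ⁅X, Y⁆ : m) : g) := by
  set c : ℝ := (Real.sqrt 3)⁻¹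
  have hc : c * c * 3 = 1 := by
    rw [← mul_inv, Real.mul_self_sqrt (by norm_num), inv_mul_cancel₀ (by norm_num)]
  let s : Module.End ℝ m := (σ.toLinearEquiv : g →ₗ[ℝ] g).restrict hinv
  have hs : ∀ x, s (s x) + s x + x = 0 := fun x => Subtype.ext (hquad x x.2)
  have hJs : ∀ x : m, J x = ↑(c • ((2 : ℝ) • s x + x)) := fun x => by rw [hJ]; rfl
  have hσk : ∀ x ∈ k, σ x ∈ k := fun x hx => by rwa [(hk x).1 hx]
  have hBk : ∀ x y, bracketComponent m k m hcompl.symm (s x) (s y)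
      = bracketComponent m k m hcompl.symm x y := fun x y =>
    (bracketComponent_map σ hcompl.symm hinv hσk hinv x y).trans
      (Subtype.ext ((hk _).1 (SetLike.coe_mem _)))
  have hBm : ∀ x y, bracketComponent m m k hcompl (s x) (s y)
      = s (bracketComponent m m k hcompl x y) := bracketComponent_map σ hcompl hinv hinv hσk
  lift X to m using hX
  lift Y to m using hY
  have hkpart : bracketComponent m k m hcompl.symm (c • ((2 : ℝ) • s X + X))
      (c • ((2 : ℝ) • s Y + Y)) = bracketComponent m k m hcompl.symm X Y := by
    rw [map_smul, LinearMap.map_smul₂, LinearMap.apply_two_smul_add_of_invariant hs hBk,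
      smul_smul, smul_smul, hc, one_smul]
  have hmpart : bracketComponent m m k hcompl (c • ((2 : ℝ) • s X + X)) Y
      = -(c • ((2 : ℝ) • s (bracketComponent m m k hcompl X Y)
        + bracketComponent m m k hcompl X Y)) := by
    simp only [LinearMap.map_smul₂, LinearMap.map_add₂,
      LinearMap.apply_left_of_equivariant hs hs hBm]
    module
  rw [hJs, hJs, hJs]
  exact ⟨congrArg Subtype.val hkpart, (congrArg Subtype.val hmpart).trans (m.coe_neg _)⟩

/-- For an order-3 automorphism `σ` with reductive decomposition `g = m ⊕ k`
(`k = Fix σ`, `m` σ-invariant with `σ² + σ + Id = 0` on `m`) and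
`J₀ = (1/√3)(2σ + Id)`, for all `X, Y ∈ m`:
`[J₀X, J₀Y]_k = [X,Y]_k` and `[J₀X, Y]_m = −J₀[X,Y]_m`. -/
theorem canonical_J_bracket
    {g : Type*} [LieRing g] [LieAlgebra ℝ g]
    (σ : g ≃ₗ⁅ℝ⁆ g)
    (hσ3 : ∀ x : g, σ (σ (σ x)) = x)
    (k m : Submodule ℝ g)
    (hk : ∀ x : g, x ∈ k ↔ σ x = x)
    (hinv : ∀ x ∈ m, σ x ∈ m)
    (hquad : ∀ x ∈ m, σ (σ x) + σ x + x = 0)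
    (hcompl : IsCompl m k)
    (J : g → g)
    (hJ : ∀ x : g, J x = (Real.sqrt 3)⁻¹ • ((2 : ℝ) • σ x + x))
    (X Y : g) (hX : X ∈ m) (hY : Y ∈ m) :
    ((Submodule.linearProjOfIsCompl k m hcompl.symm ⁅J X, J Y⁆ : k) : g)
        = ((Submodule.linearProjOfIsCompl k m hcompl.symm ⁅X, Y⁆ : k) : g)
    ∧ ((Submodule.linearProjOfIsCompl m k hcompl ⁅J X, Y⁆ : m) : g)
        = -J ((Submodule.linearProjOfIsCompl m k hcompl ⁅X, Y⁆ : m) : g) :=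
  canonical_J_bracket_general σ k m hk hinv hquad hcompl J hJ X Y hX hY
end

section
/- In the root system of type C_m (m ≥ 2), with β_i = α_{1i} (1 ≤ i ≤ m) and β_{m+j} = α̃_{1(m−j)} (1 ≤ j ≤ m−1): for 1 ≤ i < j ≤ m, β_i − β_j = −α_{(i+1)j} is a root, and β_i + β_j is a root if and only if (i,j) = (m−1, m), in which case β_{m−1} + β_m = μ. -/
/-- Coefficient vector of the root `α_{ij} = α_i + ⋯ + α_j` of `C_m` in the basis of
simple roots (index `k` runs over `1,…,m`). -/
def alphaC (i j : ℕ) : ℕ → ℤ := fun k => if i ≤ k ∧ k ≤ j then 1 else 0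

/-- Coefficient vector of `α̃_{ij} = α_i + ⋯ + α_{j−1} + 2α_j + ⋯ + 2α_{m−1} + α_m`. -/
def alphaTildeC (m i j : ℕ) : ℕ → ℤ := fun k =>
  if i ≤ k ∧ k < j then 1 else if j ≤ k ∧ k ≤ m - 1 then 2 else if k = m then 1 else 0

/-- `v` is (the coefficient vector of) a positive root of `C_m`. -/
def isPosRootC (m : ℕ) (v : ℕ → ℤ) : Prop :=
  (∃ i j, 1 ≤ i ∧ i ≤ j ∧ j ≤ m ∧ v = alphaC i j) ∨
  (∃ i j, 1 ≤ i ∧ i ≤ j ∧ j + 1 ≤ m ∧ v = alphaTildeC m i j)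

/-- `v` is a root of `C_m`. -/
def isRootC (m : ℕ) (v : ℕ → ℤ) : Prop := isPosRootC m v ∨ isPosRootC m (-v)

/-- `β_i = α_{1i}` for `1 ≤ i ≤ m` and `β_{m+j} = α̃_{1(m−j)}` for `1 ≤ j ≤ m−1`. -/
def betaC (m i : ℕ) : ℕ → ℤ := if i ≤ m then alphaC 1 i else alphaTildeC m 1 (2 * m - i)

/-- In `C_m`, for `1 ≤ i < j ≤ m`: `β_i − β_j = −α_{(i+1)j}` is a root, `β_i + β_j` is a
root iff `(i,j) = (m−1,m)`, and `β_{m−1} + β_m = μ = α̃_{11}`. -/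
theorem beta_sums_first_block_Cm
    (m i j : ℕ) (hm : 2 ≤ m) (h1 : 1 ≤ i) (hij : i < j) (hj : j ≤ m) :
    betaC m i - betaC m j = -(alphaC (i + 1) j)
    ∧ isRootC m (betaC m i - betaC m j)
    ∧ (isRootC m (betaC m i + betaC m j) ↔ (i = m - 1 ∧ j = m))
    ∧ betaC m (m - 1) + betaC m m = alphaTildeC m 1 1 := by
  have him : i ≤ m := le_trans hij.le hj
  have hbi : betaC m i = alphaC 1 i := if_pos him
  have hbj : betaC m j = alphaC 1 j := if_pos hj
  have heq : betaC m i - betaC m j = -(alphaC (i + 1) j) := by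
    funext k
    simp only [hbi, hbj, alphaC, Pi.sub_apply, Pi.neg_apply]
    split_ifs <;> omega
  have hmu : betaC m (m - 1) + betaC m m = alphaTildeC m 1 1 := by
    have hb1 : betaC m (m - 1) = alphaC 1 (m - 1) := if_pos (by omega)
    have hb2 : betaC m m = alphaC 1 m := if_pos le_rfl
    funext k
    simp only [hb1, hb2, alphaC, alphaTildeC, Pi.add_apply]
    split_ifs <;> omega
  refine ⟨heq, ?_, ?_, hmu⟩
  · right
    rw [heq, neg_neg]
    exact Or.inl ⟨i + 1, j, by omega, by omega, hj, rfl⟩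
  · constructor
    · rintro (h | h)
      · rcases h with ⟨a, b, ha, hab, hbm, hv⟩ | ⟨a, b, ha, hab, hbm, hv⟩
        · have h1' := congrFun hv 1
          simp only [Pi.add_apply, hbi, hbj, alphaC] at h1'
          split_ifs at h1' <;> omega
        · have hM := congrFun hv m
          have hM1 := congrFun hv (m - 1)
          simp only [Pi.add_apply, hbi, hbj, alphaC, alphaTildeC] at hM hM1
          split_ifs at hM hM1 <;> omega
      · rcases h with ⟨a, b, ha, hab, hbm, hv⟩ | ⟨a, b, ha, hab, hbm, hv⟩ <;>
        · have h1' := congrFun hv 1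
          simp only [Pi.neg_apply, Pi.add_apply, hbi, hbj, alphaC, alphaTildeC] at h1'
          split_ifs at h1' <;> omega
    · rintro ⟨hi', hj'⟩
      subst hi' hj'
      exact Or.inl (Or.inr ⟨1, 1, le_rfl, le_rfl, by omega, hmu⟩)
end

section
/- In the root system of type C_m (m ≥ 2), for 1 ≤ i ≤ m and 1 ≤ j ≤ m−1, the sum β_i + β_{m+j} is a root if and only if j = m−i−1 with 1 ≤ i ≤ m−2; in that case β_i + β_{2m−i−1} = μ. -/
lemma betaC_apply (m i k : ℕ) :
    betaC m i k = if i ≤ m then alphaC 1 i k else alphaTildeC m 1 (2 * m - i) k := by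
  unfold betaC; split <;> rfl

set_option maxHeartbeats 1600000

/-- In `C_m`, for `1 ≤ i ≤ m` and `1 ≤ j ≤ m−1`: `β_i + β_{m+j}` is a root iff
`j = m−i−1` with `1 ≤ i ≤ m−2`, and in that case `β_i + β_{2m−i−1} = μ = α̃_{11}`. -/
theorem beta_mixed_sums_Cm
    (m i j : ℕ) (hm : 2 ≤ m) (h1 : 1 ≤ i) (hi : i ≤ m) (hj1 : 1 ≤ j) (hj : j ≤ m - 1) :
    (isRootC m (betaC m i + betaC m (m + j)) ↔ (j = m - i - 1 ∧ 1 ≤ i ∧ i ≤ m - 2))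
    ∧ (∀ i', 1 ≤ i' → i' ≤ m - 2 →
        betaC m i' + betaC m (2 * m - i' - 1) = alphaTildeC m 1 1) := by
  have key : ∀ i', 1 ≤ i' → i' ≤ m - 2 →
      betaC m i' + betaC m (2 * m - i' - 1) = alphaTildeC m 1 1 := by
    intro i' h1' h2'
    funext k
    simp only [Pi.add_apply, betaC_apply, alphaC, alphaTildeC]
    split_ifs <;> omega
  have hbi : betaC m i = alphaC 1 i := if_pos hi
  have hbj : betaC m (m + j) = alphaTildeC m 1 (m - j) := by
    have : ¬ (m + j ≤ m) := by omega
    have h2m : 2 * m - (m + j) = m - j := by omega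
    rw [betaC, if_neg this, h2m]
  refine ⟨⟨?_, ?_⟩, key⟩
  · rw [hbi, hbj]
    rintro (h | h)
    · rcases h with ⟨a, b, ha, hab, hb, hv⟩ | ⟨a, b, ha, hab, hb, hv⟩
      · exfalso
        have e1 := congrFun hv 1
        simp only [Pi.add_apply, betaC_apply, alphaC, alphaTildeC] at e1
        split_ifs at e1 <;> omega
      · have e1 := congrFun hv 1
        simp only [Pi.add_apply, betaC_apply, alphaC, alphaTildeC] at e1
        have hab1 : a = 1 ∧ b = 1 := by split_ifs at e1 <;> omega
        obtain ⟨rfl, rfl⟩ := hab1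
        have e2 := congrFun hv i
        simp only [Pi.add_apply, betaC_apply, alphaC, alphaTildeC] at e2
        have h2 : i + j < m := by split_ifs at e2 <;> omega
        have e3 := congrFun hv (i + 1)
        simp only [Pi.add_apply, betaC_apply, alphaC, alphaTildeC] at e3
        have h3 : m ≤ i + j + 1 := by split_ifs at e3 <;> omega
        omega
    · exfalso
      rcases h with ⟨a, b, ha, hab, hb, hv⟩ | ⟨a, b, ha, hab, hb, hv⟩ <;>
      · have e1 := congrFun hv 1
        simp only [Pi.neg_apply, Pi.add_apply, betaC_apply, alphaC, alphaTildeC] at e1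
        split_ifs at e1 <;> omega
  · rintro ⟨rfl, hi1, hi2⟩
    have hmj : m + (m - i - 1) = 2 * m - i - 1 := by omega
    rw [hmj]
    left; right
    exact ⟨1, 1, le_refl 1, le_refl 1, by omega, key i hi1 hi2⟩
end

section
/- On CP^{2m−1} = Sp(m)/(Sp(m−1)×U(1)), m ≥ 2, with the standard Sp(m)-homogeneous metric, if u, v ∈ m satisfy [u,v] = 0 in sp(m), then u and v are linearly dependent. Consequently the standard Sp(m)-homogeneous metric has strictly positive sectional curvature. -/
/-!
Write `u ∈ 𝔪` as a skew-Hermitian matrix supported on row and column `0`. Such a matrix is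
determined by its row `0`. If `u` and `v` commute, then for `l ≠ 0` the `(j, l)` entries of
`u * v = v * u` read `u j 0 * v 0 l = v j 0 * u 0 l`. When some `u p 0` (`p ≠ 0`) is nonzero,
this gives `v 0 l = q * u 0 l` with `q = (u p 0)⁻¹ * v p 0`; skew-Hermitianity forces
`star q = q`, so `q` is real, and the `(0, p)` entry extends the relation to `l = 0`. Otherwise
row `0` of `u` reduces to the imaginary quaternion `a = u 0 0`; if `a ≠ 0` the same equations kill
the rest of row `0` of `v`, and `b = v 0 0` commutes with `a`, so `b * a⁻¹` is self-adjoint,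
hence real. In both cases `v` is a real multiple of `u`, or `u = 0`.
-/

open scoped Quaternion
open Matrix

namespace Quaternion

theorem exists_eq_smul_of_commute {a b : ℍ[ℝ]} (ha : star a = -a) (hb : star b = -b)
    (ha0 : a ≠ 0) (hab : Commute a b) : ∃ c : ℝ, b = c • a := by
  set q := b * a⁻¹
  have hq : star q = q := by
    rw [star_mul, star_inv₀, ha, hb, inv_neg, neg_mul_neg]
    exact hab.inv_left₀.eq
  refine ⟨q.re, ?_⟩
  rw [← coe_mul_eq_smul, ← star_eq_self.mp hq, inv_mul_cancel_right₀ ha0]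

end Quaternion

namespace Matrix

variable {n α : Type*} {i₀ : n}

def IsSupportedOnRowCol [Zero α] (i₀ : n) (u : Matrix n n α) : Prop :=
  ∀ j l, j ≠ i₀ → l ≠ i₀ → u j l = 0

theorem IsSupportedOnRowCol.smul {R : Type*} [Zero α] [SMulZeroClass R α] {u : Matrix n n α}
    (hu : u.IsSupportedOnRowCol i₀) (c : R) : (c • u).IsSupportedOnRowCol i₀ :=
  fun j l hj hl => by rw [smul_apply, hu j l hj hl, smul_zero]

theorem apply_eq_neg_star_of_conjTranspose_eq_neg [AddGroup α] [StarAddMonoid α]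
    {u : Matrix n n α} (hu : uᴴ = -u) (i j : n) : u j i = -star (u i j) := by
  have h := congrFun (congrFun hu j) i
  rw [conjTranspose_apply, neg_apply] at h
  rw [h, neg_neg]

theorem eq_of_row_eq [AddGroup α] [StarAddMonoid α] {u v : Matrix n n α} (hu : uᴴ = -u)
    (hv : vᴴ = -v) (hus : u.IsSupportedOnRowCol i₀) (hvs : v.IsSupportedOnRowCol i₀)
    (h : ∀ l, u i₀ l = v i₀ l) : u = v := by
  ext j l
  by_cases hj : j = i₀
  · rw [hj, h]
  by_cases hl : l = i₀
  · rw [hl, apply_eq_neg_star_of_conjTranspose_eq_neg hu,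
      apply_eq_neg_star_of_conjTranspose_eq_neg hv, h]
  · rw [hus j l hj hl, hvs j l hj hl]

theorem conjTranspose_real_smul {u : Matrix n n ℍ[ℝ]} (c : ℝ) : (c • u)ᴴ = c • uᴴ :=
  Matrix.ext fun i j => by simp only [conjTranspose_apply, smul_apply, Quaternion.star_smul]

theorem eq_smul_of_row_eq_smul {u v : Matrix n n ℍ[ℝ]} (hu : uᴴ = -u) (hv : vᴴ = -v)
    (hus : u.IsSupportedOnRowCol i₀) (hvs : v.IsSupportedOnRowCol i₀) {c : ℝ}
    (h : ∀ l, v i₀ l = c • u i₀ l) : v = c • u :=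
  eq_of_row_eq hv (by rw [conjTranspose_real_smul, hu, smul_neg]) hvs (hus.smul c) h

variable [Fintype n]

theorem mul_apply_eq_of_forall_ne [NonUnitalNonAssocSemiring α] {u v : Matrix n n α} {j l : n}
    (h : ∀ k ≠ i₀, u j k * v k l = 0) : (u * v) j l = u j i₀ * v i₀ l := by
  rw [mul_apply]
  exact Finset.sum_eq_single i₀ (fun k _ hk => h k hk) (by simp)

theorem mul_apply_eq_of_isSupportedOnRowCol [NonUnitalNonAssocSemiring α] {u v : Matrix n n α}
    (hv : v.IsSupportedOnRowCol i₀) (j : n) {l : n} (hl : l ≠ i₀) :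
    (u * v) j l = u j i₀ * v i₀ l :=
  mul_apply_eq_of_forall_ne fun k hk => by rw [hv k l hk hl, mul_zero]

theorem apply_mul_apply_comm_of_commute [NonUnitalNonAssocSemiring α] {u v : Matrix n n α}
    (hu : u.IsSupportedOnRowCol i₀) (hv : v.IsSupportedOnRowCol i₀) (h : u * v = v * u)
    (j : n) {l : n} (hl : l ≠ i₀) : u j i₀ * v i₀ l = v j i₀ * u i₀ l := by
  rw [← mul_apply_eq_of_isSupportedOnRowCol hv j hl, ← mul_apply_eq_of_isSupportedOnRowCol hu j hl,
    h]

section Quaternion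

variable {u v : Matrix n n ℍ[ℝ]}

theorem exists_eq_smul_of_commute_of_apply_ne_zero (hu : uᴴ = -u) (hv : vᴴ = -v)
    (hus : u.IsSupportedOnRowCol i₀) (hvs : v.IsSupportedOnRowCol i₀) (h : u * v = v * u)
    {p : n} (hp : p ≠ i₀) (hup : u p i₀ ≠ 0) : ∃ c : ℝ, v = c • u := by
  set q := (u p i₀)⁻¹ * v p i₀
  have hrow : ∀ l ≠ i₀, v i₀ l = q * u i₀ l := fun l hl => by
    rw [mul_assoc, ← apply_mul_apply_comm_of_commute hus hvs h p hl, inv_mul_cancel_left₀ hup]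
  have hup' : u i₀ p ≠ 0 := by
    rw [apply_eq_neg_star_of_conjTranspose_eq_neg hu, neg_ne_zero, star_ne_zero] at hup
    exact hup
  have hq : star q = q := by
    rw [star_mul, star_inv₀, ← neg_neg (star (v p i₀)), ← neg_neg (star (u p i₀)),
      ← apply_eq_neg_star_of_conjTranspose_eq_neg hu, ← apply_eq_neg_star_of_conjTranspose_eq_neg hv,
      inv_neg, neg_mul_neg, hrow p hp, mul_inv_cancel_right₀ hup']
  have hq_real : (q.re : ℍ[ℝ]) = q := (Quaternion.star_eq_self.mp hq).symm
  refine ⟨q.re, eq_smul_of_row_eq_smul hu hv hus hvs fun l => ?_⟩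
  rw [← Quaternion.coe_mul_eq_smul, hq_real]
  rcases eq_or_ne l i₀ with rfl | hl
  · have hdiag := apply_mul_apply_comm_of_commute hus hvs h l hp
    rw [hrow p hp, ← mul_assoc] at hdiag
    rw [← mul_right_cancel₀ hup' hdiag, ← hq_real, Quaternion.coe_commutes]
  · exact hrow l hl

theorem exists_eq_smul_of_commute_of_col_eq_zero (hu : uᴴ = -u) (hv : vᴴ = -v)
    (hus : u.IsSupportedOnRowCol i₀) (hvs : v.IsSupportedOnRowCol i₀) (h : u * v = v * u)
    (hcol : ∀ p ≠ i₀, u p i₀ = 0) (ha : u i₀ i₀ ≠ 0) : ∃ c : ℝ, v = c • u := by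
  have hrow_u : ∀ l ≠ i₀, u i₀ l = 0 := fun l hl => by
    rw [apply_eq_neg_star_of_conjTranspose_eq_neg hu, hcol l hl, star_zero, neg_zero]
  have hrow_v : ∀ l ≠ i₀, v i₀ l = 0 := fun l hl => by
    have h0 := apply_mul_apply_comm_of_commute hus hvs h i₀ hl
    rw [hrow_u l hl, mul_zero] at h0
    exact (mul_eq_zero.mp h0).resolve_left ha
  have hdiag : Commute (u i₀ i₀) (v i₀ i₀) := by
    have h0 := congrFun (congrFun h i₀) i₀
    rwa [mul_apply_eq_of_forall_ne fun k hk => by rw [hrow_u k hk, zero_mul],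
      mul_apply_eq_of_forall_ne fun k hk => by rw [hrow_v k hk, zero_mul]] at h0
  have hstar {w : Matrix n n ℍ[ℝ]} (hw : wᴴ = -w) : star (w i₀ i₀) = -w i₀ i₀ :=
    neg_eq_iff_eq_neg.mp (apply_eq_neg_star_of_conjTranspose_eq_neg hw i₀ i₀).symm
  obtain ⟨c, hc⟩ := Quaternion.exists_eq_smul_of_commute (hstar hu) (hstar hv) ha hdiag
  refine ⟨c, eq_smul_of_row_eq_smul hu hv hus hvs fun l => ?_⟩
  rcases eq_or_ne l i₀ with rfl | hl
  · exact hc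
  · rw [hrow_v l hl, hrow_u l hl, smul_zero]

theorem eq_zero_or_exists_eq_smul_of_commute (hu : uᴴ = -u) (hv : vᴴ = -v)
    (hus : u.IsSupportedOnRowCol i₀) (hvs : v.IsSupportedOnRowCol i₀) (h : u * v = v * u) :
    u = 0 ∨ ∃ c : ℝ, v = c • u := by
  by_cases hcol : ∃ p ≠ i₀, u p i₀ ≠ 0
  · obtain ⟨p, hp, hup⟩ := hcol
    exact .inr (exists_eq_smul_of_commute_of_apply_ne_zero hu hv hus hvs h hp hup)
  push Not at hcol
  by_cases ha : u i₀ i₀ = 0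
  · refine .inl (eq_of_row_eq hu (by simp) hus (fun _ _ _ _ => rfl) fun l => ?_)
    rcases eq_or_ne l i₀ with rfl | hl
    · exact ha
    · rw [apply_eq_neg_star_of_conjTranspose_eq_neg hu, hcol l hl, star_zero, neg_zero, zero_apply]
  · exact .inr (exists_eq_smul_of_commute_of_col_eq_zero hu hv hus hvs h hcol ha)

theorem not_linearIndependent_of_commute (hu : uᴴ = -u) (hv : vᴴ = -v)
    (hus : u.IsSupportedOnRowCol i₀) (hvs : v.IsSupportedOnRowCol i₀) (h : u * v = v * u) :
    ¬ LinearIndependent ℝ ![u, v] := by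
  rw [LinearIndependent.pair_iff]
  intro hli
  rcases eq_zero_or_exists_eq_smul_of_commute hu hv hus hvs h with rfl | ⟨c, rfl⟩
  · exact one_ne_zero (hli 1 0 (by simp)).1
  · exact neg_ne_zero.mpr one_ne_zero (hli c (-1) (by rw [neg_one_smul, add_neg_cancel])).2

end Quaternion

end Matrix

theorem bracket_zero_implies_dependent_CPn_general
    (m : ℕ) [NeZero m]
    (u v : Matrix (Fin m) (Fin m) ℍ[ℝ])
    (huskew : uᴴ = -u)
    (humem : ∀ j l : Fin m, j ≠ 0 → l ≠ 0 → u j l = 0)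
    (hvskew : vᴴ = -v)
    (hvmem : ∀ j l : Fin m, j ≠ 0 → l ≠ 0 → v j l = 0) :
    (⁅u, v⁆ = 0 → ¬ LinearIndependent ℝ ![u, v])
    ∧ (LinearIndependent ℝ ![u, v] → ⁅u, v⁆ ≠ 0) := by
  have hdep : ⁅u, v⁆ = 0 → ¬ LinearIndependent ℝ ![u, v] := fun h =>
    not_linearIndependent_of_commute huskew hvskew humem hvmem
      (by rwa [Ring.lie_def, sub_eq_zero] at h)
  exact ⟨hdep, fun hli h => hdep h hli⟩

/-- On `CP^{2m−1} = Sp(m)/(Sp(m−1)×U(1))`, `m ≥ 2`, realizing `sp(m)` as the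
quaternionic skew-adjoint `m×m` matrices and `m = k^⊥` as the skew-adjoint matrices
vanishing outside the first row and column whose `(0,0)` entry has no `i`-component: if
`u, v ∈ m` satisfy `[u,v] = 0` in `sp(m)`, then `u` and `v` are linearly dependent.
Consequently (the curvature of the normal homogeneous metric on a plane being positive
iff the bracket of a spanning pair is nonzero) the standard `Sp(m)`-homogeneous metric
has strictly positive sectional curvature. -/
theorem bracket_zero_implies_dependent_CPn
    (m : ℕ) [NeZero m] (hm : 2 ≤ m)
    (u v : Matrix (Fin m) (Fin m) ℍ[ℝ])
    (huskew : uᴴ = -u)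
    (humem : ∀ j l : Fin m, j ≠ 0 → l ≠ 0 → u j l = 0)
    (hu00 : (u 0 0).imI = 0)
    (hvskew : vᴴ = -v)
    (hvmem : ∀ j l : Fin m, j ≠ 0 → l ≠ 0 → v j l = 0)
    (hv00 : (v 0 0).imI = 0) :
    (⁅u, v⁆ = 0 → ¬ LinearIndependent ℝ ![u, v])
    ∧ (LinearIndependent ℝ ![u, v] → ⁅u, v⁆ ≠ 0) :=
  bracket_zero_implies_dependent_CPn_general m u v huskew humem hvskew hvmem
end
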